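/- Weighted pointwise bound for the nonlinear collision operator: for every 0 < ϱ < 1/4 there exists a constant C_ϱ such that for every bounded measurable h : ℝ³ → ℝ and every v ∈ ℝ³, | 𝔴_ϱ(v) Γ( h/𝔴_ϱ , h/𝔴_ϱ )(v) | ≤ C_ϱ (1+|v|) ‖h‖_{L^∞(ℝ³)}², where 𝔴_ϱ(v) = e^{ϱ|v|²}. -/

import Mathlib

open MeasureTheory Real
open scoped RealInnerProductSpace

noncomputable section

/-- The surface measure on the unit sphere `S² ⊂ ℝ³`. -/
def sphereMeasure : Measure (Metric.sphere (0 : EuclideanSpace ℝ (Fin 3)) 1) :=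
  (volume : Measure (EuclideanSpace ℝ (Fin 3))).toSphere

/-- The global Maxwellian `μ(v) = (2π)^{−3/2} e^{−|v|²/2}`. -/
def globalMaxwellian (v : EuclideanSpace ℝ (Fin 3)) : ℝ :=
  (2 * Real.pi) ^ (-(3 : ℝ) / 2) * Real.exp (-‖v‖ ^ 2 / 2)

/-- The nonlinear collision form `Γ(f,g) = Γ₊(f,g) − Γ₋(f,g)`, written as gain minus loss:
`Γ(f,g)(v) = ∫∫ |(v−v⋆)·𝔲| √μ(v⋆) (f(v′)g(v⋆′) + g(v′)f(v⋆′)) d𝔲 dv⋆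
           − ∫∫ |(v−v⋆)·𝔲| √μ(v⋆) (f(v)g(v⋆) + g(v)f(v⋆)) d𝔲 dv⋆`. -/
def gammaOp (f g : EuclideanSpace ℝ (Fin 3) → ℝ) (v : EuclideanSpace ℝ (Fin 3)) : ℝ :=
  (∫ vs : EuclideanSpace ℝ (Fin 3),
    ∫ u : Metric.sphere (0 : EuclideanSpace ℝ (Fin 3)) 1,
      |⟪v - vs, (u : EuclideanSpace ℝ (Fin 3))⟫| * Real.sqrt (globalMaxwellian vs) *
        (f (v - ⟪v - vs, (u : EuclideanSpace ℝ (Fin 3))⟫ • (u : EuclideanSpace ℝ (Fin 3))) *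
            g (vs + ⟪v - vs, (u : EuclideanSpace ℝ (Fin 3))⟫ • (u : EuclideanSpace ℝ (Fin 3))) +
          g (v - ⟪v - vs, (u : EuclideanSpace ℝ (Fin 3))⟫ • (u : EuclideanSpace ℝ (Fin 3))) *
            f (vs + ⟪v - vs, (u : EuclideanSpace ℝ (Fin 3))⟫ • (u : EuclideanSpace ℝ (Fin 3))))
      ∂sphereMeasure) -
  ∫ vs : EuclideanSpace ℝ (Fin 3),
    ∫ u : Metric.sphere (0 : EuclideanSpace ℝ (Fin 3)) 1,
      |⟪v - vs, (u : EuclideanSpace ℝ (Fin 3))⟫| * Real.sqrt (globalMaxwellian vs) *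
        (f v * g vs + g v * f vs) ∂sphereMeasure

/-- The Gaussian weight `𝔴_ϱ(v) = e^{ϱ|v|²}`. -/
def gaussWeight (ϱ : ℝ) (v : EuclideanSpace ℝ (Fin 3)) : ℝ := Real.exp (ϱ * ‖v‖ ^ 2)


/-! Collision invariance gives `𝔴_ϱ(v) ≤ 𝔴_ϱ(v′) 𝔴_ϱ(v⋆′)` for `ϱ ≥ 0`, and trivially
`𝔴_ϱ(v) ≤ 𝔴_ϱ(v) 𝔴_ϱ(v⋆)`, so the weight in front of `Γ` absorbs both products of `h / 𝔴_ϱ`,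
leaving `‖h‖_∞²`. What remains is bounded by `(1 + |v|)(1 + |v⋆|) e^{-|v⋆|²/4}`, using
`|(v − v⋆)·𝔲| ≤ (1 + |v|)(1 + |v⋆|)` and `√μ(v⋆) ≤ e^{-|v⋆|²/4}`; this is integrable in `v⋆`,
and the sphere has finite measure. -/

instance : IsFiniteMeasure sphereMeasure :=
  inferInstanceAs (IsFiniteMeasure (volume : Measure (EuclideanSpace ℝ (Fin 3))).toSphere)

section InnerProductSpace

variable {V : Type*} [NormedAddCommGroup V] [InnerProductSpace ℝ V]

theorem norm_sub_inner_smul_sq_add_norm_add_inner_smul_sq (v w u : V) (hu : ‖u‖ = 1) :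
    ‖v - ⟪v - w, u⟫ • u‖ ^ 2 + ‖w + ⟪v - w, u⟫ • u‖ ^ 2 = ‖v‖ ^ 2 + ‖w‖ ^ 2 := by
  rw [norm_sub_sq_real, norm_add_sq_real, real_inner_smul_right, real_inner_smul_right,
    norm_smul, hu, Real.norm_eq_abs, mul_one, sq_abs, inner_sub_left]
  ring

theorem abs_inner_sub_le_one_add_mul_one_add (v w u : V) (hu : ‖u‖ = 1) :
    |⟪v - w, u⟫| ≤ (1 + ‖v‖) * (1 + ‖w‖) :=
  calc |⟪v - w, u⟫| ≤ ‖v - w‖ * ‖u‖ := abs_real_inner_le_norm _ _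
    _ ≤ ‖v‖ + ‖w‖ := by rw [hu, mul_one]; exact norm_sub_le _ _
    _ ≤ (1 + ‖v‖) * (1 + ‖w‖) := by nlinarith [norm_nonneg v, norm_nonneg w]

variable [FiniteDimensional ℝ V] [MeasurableSpace V] [BorelSpace V]

theorem integrable_exp_neg_mul_sq_norm {b : ℝ} (hb : 0 < b) :
    Integrable (fun v : V => exp (-b * ‖v‖ ^ 2)) := by
  refine (GaussianFourier.integrable_cexp_neg_mul_sq_norm_add (V := V) (b := b)
    (by simpa using hb) 0 0).norm.congr (.of_forall fun v => ?_)
  simp only [zero_mul, add_zero, Complex.norm_exp]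
  norm_cast

theorem integrable_one_add_norm_mul_exp_neg_sq_norm_div_four :
    Integrable (fun v : V => (1 + ‖v‖) * exp (-‖v‖ ^ 2 / 4)) := by
  refine ((integrable_exp_neg_mul_sq_norm (V := V) (b := 1 / 8) (by norm_num)).const_mul
    (exp 2)).mono (by fun_prop) (.of_forall fun v => ?_)
  rw [Real.norm_of_nonneg (by positivity), Real.norm_of_nonneg (by positivity), ← exp_add]
  calc (1 + ‖v‖) * exp (-‖v‖ ^ 2 / 4)
      ≤ exp ‖v‖ * exp (-‖v‖ ^ 2 / 4) := by
        gcongr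
        linarith [add_one_le_exp ‖v‖]
    _ ≤ exp (2 + -(1 / 8) * ‖v‖ ^ 2) := by
        rw [← exp_add, exp_le_exp]; nlinarith [sq_nonneg (‖v‖ - 4)]

end InnerProductSpace

theorem abs_integral_integral_le {α β : Type*} [MeasurableSpace α] [MeasurableSpace β]
    {μ : Measure α} {ν : Measure β} [IsFiniteMeasure ν] {F : α → β → ℝ} {g : α → ℝ}
    (hF : ∀ a b, |F a b| ≤ g a) (hg : Integrable g μ) :
    |∫ a, ∫ b, F a b ∂ν ∂μ| ≤ ν.real Set.univ * ∫ a, g a ∂μ := by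
  rw [← integral_const_mul, ← Real.norm_eq_abs]
  refine norm_integral_le_of_norm_le (hg.const_mul _) (.of_forall fun a => ?_)
  rw [mul_comm]
  exact norm_integral_le_of_norm_le_const (.of_forall (hF a))

theorem sqrt_globalMaxwellian_le (v : EuclideanSpace ℝ (Fin 3)) :
    √(globalMaxwellian v) ≤ exp (-‖v‖ ^ 2 / 4) := by
  have hconst : (2 * π) ^ (-(3 : ℝ) / 2) ≤ 1 :=
    rpow_le_one_of_one_le_of_nonpos (by nlinarith [pi_gt_three]) (by norm_num)
  calc √(globalMaxwellian v) ≤ √(exp (-‖v‖ ^ 2 / 2)) :=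
        sqrt_le_sqrt (mul_le_of_le_one_left (exp_pos _).le hconst)
    _ = exp (-‖v‖ ^ 2 / 4) := by rw [← exp_half]; ring_nf

theorem gaussWeight_le_mul_of_sq_norm_le {ϱ : ℝ} (hϱ : 0 ≤ ϱ) {v a b : EuclideanSpace ℝ (Fin 3)}
    (hab : ‖v‖ ^ 2 ≤ ‖a‖ ^ 2 + ‖b‖ ^ 2) :
    gaussWeight ϱ v ≤ gaussWeight ϱ a * gaussWeight ϱ b := by
  rw [gaussWeight, gaussWeight, gaussWeight, ← exp_add, ← mul_add]
  gcongr

theorem abs_div_gaussWeight_mul_div_gaussWeight_le {ϱ M : ℝ} (hϱ : 0 ≤ ϱ)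
    {h : EuclideanSpace ℝ (Fin 3) → ℝ} (hM : ∀ v, |h v| ≤ M) {v a b : EuclideanSpace ℝ (Fin 3)}
    (hab : ‖v‖ ^ 2 ≤ ‖a‖ ^ 2 + ‖b‖ ^ 2) :
    |h a / gaussWeight ϱ a * (h b / gaussWeight ϱ b)| ≤ M ^ 2 / gaussWeight ϱ v := by
  have hwa : 0 < gaussWeight ϱ a := exp_pos _
  have hwb : 0 < gaussWeight ϱ b := exp_pos _
  rw [div_mul_div_comm, abs_div, abs_mul, abs_of_pos (mul_pos hwa hwb), sq]
  exact div_le_div₀ (mul_self_nonneg M) (mul_le_mul (hM a) (hM b) (abs_nonneg _)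
    ((abs_nonneg _).trans (hM a))) (exp_pos _) (gaussWeight_le_mul_of_sq_norm_le hϱ hab)

theorem abs_collision_integrand_le {ϱ M : ℝ} (hϱ : 0 ≤ ϱ) {h : EuclideanSpace ℝ (Fin 3) → ℝ}
    (hM : ∀ v, |h v| ≤ M) {v vs a b : EuclideanSpace ℝ (Fin 3)} {c : ℝ}
    (hc : |c| ≤ (1 + ‖v‖) * (1 + ‖vs‖)) (hab : ‖v‖ ^ 2 ≤ ‖a‖ ^ 2 + ‖b‖ ^ 2) :
    |(|c| * √(globalMaxwellian vs) *
        (h a / gaussWeight ϱ a * (h b / gaussWeight ϱ b) +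
          h a / gaussWeight ϱ a * (h b / gaussWeight ϱ b)))| ≤
      2 * M ^ 2 / gaussWeight ϱ v * (1 + ‖v‖) * ((1 + ‖vs‖) * exp (-‖vs‖ ^ 2 / 4)) := by
  have hf := abs_div_gaussWeight_mul_div_gaussWeight_le hϱ hM hab
  rw [abs_mul, abs_mul, abs_abs, abs_of_nonneg (sqrt_nonneg _), ← two_mul, abs_mul, abs_two]
  calc |c| * √(globalMaxwellian vs) * (2 * |h a / gaussWeight ϱ a * (h b / gaussWeight ϱ b)|)
      ≤ (1 + ‖v‖) * (1 + ‖vs‖) * exp (-‖vs‖ ^ 2 / 4) * (2 * (M ^ 2 / gaussWeight ϱ v)) := by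
        gcongr
        exact sqrt_globalMaxwellian_le vs
    _ = 2 * M ^ 2 / gaussWeight ϱ v * (1 + ‖v‖) * ((1 + ‖vs‖) * exp (-‖vs‖ ^ 2 / 4)) := by ring

theorem weighted_gamma_bound_general (ϱ : ℝ) (hϱ₀ : 0 < ϱ) :
    ∃ C : ℝ, 0 < C ∧
      ∀ h : EuclideanSpace ℝ (Fin 3) → ℝ, Measurable h →
        ∀ M : ℝ, (∀ v, |h v| ≤ M) →
          ∀ v : EuclideanSpace ℝ (Fin 3),
            |gaussWeight ϱ v *
                gammaOp (fun w => h w / gaussWeight ϱ w) (fun w => h w / gaussWeight ϱ w) v| ≤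
              C * (1 + ‖v‖) * M ^ 2 := by
  refine ⟨4 * sphereMeasure.real Set.univ *
    (∫ vs : EuclideanSpace ℝ (Fin 3), (1 + ‖vs‖) * exp (-‖vs‖ ^ 2 / 4)) + 1,
    by positivity, fun h _ M hM v => ?_⟩
  set S := sphereMeasure.real Set.univ
  set A := ∫ vs : EuclideanSpace ℝ (Fin 3), (1 + ‖vs‖) * exp (-‖vs‖ ^ 2 / 4)
  set B := 2 * M ^ 2 / gaussWeight ϱ v * (1 + ‖v‖)
  have hw : 0 < gaussWeight ϱ v := exp_pos _
  have double_integral_le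
      (F : EuclideanSpace ℝ (Fin 3) → Metric.sphere (0 : EuclideanSpace ℝ (Fin 3)) 1 → ℝ)
      (hF : ∀ vs u, |F vs u| ≤ B * ((1 + ‖vs‖) * exp (-‖vs‖ ^ 2 / 4))) :
      |∫ vs, ∫ u, F vs u ∂sphereMeasure| ≤ S * (B * A) := by
    simpa only [integral_const_mul] using abs_integral_integral_le hF
      (integrable_one_add_norm_mul_exp_neg_sq_norm_div_four.const_mul B)
  calc _ = gaussWeight ϱ v * |gammaOp (fun w => h w / gaussWeight ϱ w)
        (fun w => h w / gaussWeight ϱ w) v| := by rw [abs_mul, abs_of_pos hw]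
    _ ≤ gaussWeight ϱ v * (S * (B * A) + S * (B * A)) := by
        gcongr
        refine (abs_sub _ _).trans (add_le_add (double_integral_le _ fun vs u => ?gain)
          (double_integral_le _ fun vs u => ?loss))
        case gain =>
          have hu := norm_eq_of_mem_sphere u
          exact abs_collision_integrand_le hϱ₀.le hM
            (abs_inner_sub_le_one_add_mul_one_add _ _ _ hu)
            ((le_add_of_nonneg_right (sq_nonneg _)).trans_eq
              (norm_sub_inner_smul_sq_add_norm_add_inner_smul_sq v vs u hu).symm)
        case loss =>
          exact abs_collision_integrand_le hϱ₀.le hM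
            (abs_inner_sub_le_one_add_mul_one_add _ _ _ (norm_eq_of_mem_sphere u))
            (le_add_of_nonneg_right (sq_nonneg _))
    _ = 4 * S * A * (1 + ‖v‖) * M ^ 2 := by simp only [B]; field_simp; ring
    _ ≤ (4 * S * A + 1) * (1 + ‖v‖) * M ^ 2 := by gcongr; linarith

/-- Weighted pointwise bound for the nonlinear collision operator: for `0 < ϱ < 1/4` there
is a constant `C_ϱ` such that for every bounded measurable `h` and every `v`,
`|𝔴_ϱ(v) Γ(h/𝔴_ϱ, h/𝔴_ϱ)(v)| ≤ C_ϱ (1+|v|) ‖h‖_∞²`. -/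
theorem weighted_gamma_bound (ϱ : ℝ) (hϱ₀ : 0 < ϱ) (hϱ₁ : ϱ < 1 / 4) :
    ∃ C : ℝ, 0 < C ∧
      ∀ h : EuclideanSpace ℝ (Fin 3) → ℝ, Measurable h →
        ∀ M : ℝ, (∀ v, |h v| ≤ M) →
          ∀ v : EuclideanSpace ℝ (Fin 3),
            |gaussWeight ϱ v *
                gammaOp (fun w => h w / gaussWeight ϱ w) (fun w => h w / gaussWeight ϱ w) v| ≤
              C * (1 + ‖v‖) * M ^ 2 :=
  weighted_gamma_bound_general ϱ hϱ₀
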